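/- Let n ≥ 9 and let F be a facet of Δ₃(W_n) with F ∈ T_s and F^c = {α_s} ⊔ {s_1, s_2}. Then α_s ∉ {0, 1, n−1}; equivalently, 2 ≤ α_s ≤ n−2. -/

import Mathlib

open Finset

/-- The squared cycle graph `Wₙ` on the vertex set `{0, 1, …, n−1} ⊆ ℕ`:
`x` and `y` are adjacent iff `x − y ≡ ±1, ±2 (mod n)`. -/
def sqCycle (n : ℕ) : SimpleGraph ℕ where
  Adj x y := x < n ∧ y < n ∧ x ≠ y ∧
    ((x + 1) % n = y ∨ (x + 2) % n = y ∨ (y + 1) % n = x ∨ (y + 2) % n = x)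
  symm := by
    refine ⟨?_⟩
    rintro x y ⟨hx, hy, hxy, h⟩
    exact ⟨hy, hx, hxy.symm, by tauto⟩
  loopless := by
    refine ⟨?_⟩
    rintro x ⟨-, -, hxx, -⟩
    exact hxx rfl

/-- The complement `F^c` of `F` in the vertex set of `Wₙ`. -/
def cmpl (n : ℕ) (F : Finset ℕ) : Finset ℕ := Finset.range n \ F

/-- `F` is a facet of the 3-cut complex `Δ₃(Wₙ)` : an `(n−3)`-subset of the
vertex set whose complement induces a disconnected subgraph. -/
def IsFacet (n : ℕ) (F : Finset ℕ) : Prop :=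
  F ⊆ Finset.range n ∧ F.card = n - 3 ∧
    ¬ ((sqCycle n).induce (↑(cmpl n F) : Set ℕ)).Connected

/-- `m = (n+1)/2` if `n` is odd and `m = n/2` if `n` is even. -/
def mVal (n : ℕ) : ℕ := (n + 1) / 2

/-- `α_t = m + (−1)^(t−1) ⌊t/2⌋ (mod n)`. -/
def alphaSeq (n t : ℕ) : ℕ :=
  ((((mVal n : ℤ) + (-1) ^ (t - 1) * ((t / 2 : ℕ) : ℤ)) % (n : ℤ))).toNat

/-- `x <_O y` : `x` appears strictly before `y` in `O = (α_1, …, α_n)`. -/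
def ltO (n x y : ℕ) : Prop :=
  ∃ s t : ℕ, 1 ≤ s ∧ s < t ∧ t ≤ n ∧ alphaSeq n s = x ∧ alphaSeq n t = y

/-- `F ∈ T_s` : `α_s` is the `<_O`-least element of `F^c`. -/
def classT (n s : ℕ) (F : Finset ℕ) : Prop :=
  1 ≤ s ∧ s ≤ n ∧ alphaSeq n s ∈ cmpl n F ∧
    ∀ x ∈ cmpl n F, x ≠ alphaSeq n s → ltO n (alphaSeq n s) x

/-- `F ∈ T_s` together with the decomposition `F^c = {α_s} ⊔ {s₁, s₂}`, `s₁ < s₂`. -/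
def cDecomp (n s s1 s2 : ℕ) (F : Finset ℕ) : Prop :=
  classT n s F ∧ s1 < s2 ∧ alphaSeq n s ≠ s1 ∧ alphaSeq n s ≠ s2 ∧
    cmpl n F = {alphaSeq n s, s1, s2}

/-- The order `≪` on facets. -/
def llt (n : ℕ) (F F' : Finset ℕ) : Prop :=
  ∃ s t s1 s2 t1 t2, cDecomp n s s1 s2 F ∧ cDecomp n t t1 t2 F' ∧
    (s < t ∨ (s = t ∧ (s1 < t1 ∨ (s1 = t1 ∧ s2 < t2))))

/-- The exceptional set `D` of facets (conditions (D1)–(D4)). -/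
def memD (n : ℕ) (F : Finset ℕ) : Prop :=
  ∃ s, classT n s F ∧
    ((alphaSeq n s = mVal n + 1 ∧
        cmpl n F = {alphaSeq n s, alphaSeq n s - 3, alphaSeq n s + 1}) ∨
      (alphaSeq n s = mVal n - 1 ∧
        cmpl n F = {alphaSeq n s, alphaSeq n s - 1, alphaSeq n s + 3}) ∨
      (alphaSeq n s = mVal n + 1 ∧
        cmpl n F = {alphaSeq n s, alphaSeq n s - 4, alphaSeq n s - 3}) ∨
      (mVal n - 1 ≤ alphaSeq n s ∧ alphaSeq n s ≤ n - 6 ∧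
        cmpl n F = {alphaSeq n s, alphaSeq n s + 3, alphaSeq n s + 4}))

/-- The shelling order `≺` on facets. -/
def precOrd (n : ℕ) (F F' : Finset ℕ) : Prop :=
  (¬ memD n F ∧ ¬ memD n F' ∧ llt n F F') ∨
  (memD n F ∧ ¬ memD n F' ∧ ∃ s t, classT n s F ∧ classT n t F' ∧ s < t) ∨
  (¬ memD n F ∧ memD n F' ∧ ∃ s t, classT n s F ∧ classT n t F' ∧ s ≤ t) ∨
  (memD n F ∧ memD n F' ∧ llt n F F')

/-- `F` is a spanning facet for the shelling order `≺`. -/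
def IsSpanningFacet (n : ℕ) (F : Finset ℕ) : Prop :=
  IsFacet n F ∧ ∀ lam ∈ F, ∃ G, IsFacet n G ∧ precOrd n G F ∧ G ∩ F = F.erase lam

/-- Condition (S1): `α_s = 3` and `s₁ ∈ V∖({0,1,…,2m−4} ∪ {n−1})`. -/
def condS1 (n a s1 : ℕ) : Prop :=
  a = 3 ∧ s1 ∈ Finset.range n \ (Finset.range (2 * mVal n - 3) ∪ {n - 1})

/-- Condition (S2): `4 ≤ α_s ≤ m−2` and
`s₁ ∈ V∖({α_s−4, α_s−3, α_s−2} ∪ {α_s, …, 2m−α_s−1} ∪ {n−1})`. -/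
def condS2 (n a s1 : ℕ) : Prop :=
  4 ≤ a ∧ a ≤ mVal n - 2 ∧
    s1 ∈ Finset.range n \
      (({a - 4, a - 3, a - 2} : Finset ℕ) ∪ Finset.Ico a (2 * mVal n - a) ∪ {n - 1})

/-- Condition (S3): `m−1 ≤ α_s ≤ n−3` and
`s₁ ∈ V∖({ω, ω+1, …, α_s+3 (mod n)} ∪ {y})`, with `ω = min{2m−α_s, α_s−4}` and
`y = n−1` if `α_s < n−4`, `y = 0` if `α_s = n−4`, `y = 1` if `α_s > n−4`. -/
def condS3 (n a s1 : ℕ) : Prop :=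
  mVal n - 1 ≤ a ∧ a ≤ n - 3 ∧
    s1 ∈ Finset.range n \
      ((Finset.Ico (min (2 * mVal n - a) (a - 4)) (a + 4)).image (· % n) ∪
        {if a < n - 4 then n - 1 else if a = n - 4 then 0 else 1})

/-- The set `S` of facets. -/
def memS (n : ℕ) (F : Finset ℕ) : Prop :=
  IsFacet n F ∧ ∃ s s1, cDecomp n s s1 (n - 1) F ∧
    (condS1 n (alphaSeq n s) s1 ∨ condS2 n (alphaSeq n s) s1 ∨ condS3 n (alphaSeq n s) s1)

section AlphaRangeAux

lemma alphaSeq_odd' (n t : ℕ) (ht : t % 2 = 1) :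
    alphaSeq n t = (mVal n + t / 2) % n := by
  unfold alphaSeq
  rw [Even.neg_one_pow (Nat.even_iff.mpr (by omega : (t-1) % 2 = 0)), one_mul]
  rw [show ((mVal n : ℤ) + ((t / 2 : ℕ) : ℤ)) = ((mVal n + t / 2 : ℕ) : ℤ) by push_cast; ring]
  rw [← Int.natCast_mod]
  exact Int.toNat_natCast _

lemma alphaSeq_even' (n t : ℕ) (hn : 2 ≤ n) (h1 : 1 ≤ t) (ht : t % 2 = 0) (h2 : t ≤ n) :
    alphaSeq n t = mVal n - t / 2 := by
  unfold alphaSeq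
  rw [Odd.neg_one_pow (Nat.odd_iff.mpr (by omega : (t-1) % 2 = 1))]
  have hle : t / 2 ≤ mVal n := by unfold mVal; omega
  have hlt : mVal n - t / 2 < n := by unfold mVal; omega
  rw [show ((mVal n : ℤ) + (-1) * ((t / 2 : ℕ) : ℤ)) = ((mVal n - t / 2 : ℕ) : ℤ) by
    push_cast [hle]; ring]
  rw [Int.emod_eq_of_lt (by positivity) (by exact_mod_cast hlt)]
  exact Int.toNat_natCast _

lemma alpha_eq_zero' (n t : ℕ) (hn : 9 ≤ n) (h1 : 1 ≤ t) (h2 : t ≤ n)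
    (h : alphaSeq n t = 0) : t = n := by
  rcases Nat.even_or_odd t with he | ho
  · rw [alphaSeq_even' n t (by omega) h1 (Nat.even_iff.mp he) h2] at h
    have := Nat.even_iff.mp he; unfold mVal at h; omega
  · rw [alphaSeq_odd' n t (Nat.odd_iff.mp ho)] at h
    have := Nat.odd_iff.mp ho
    have hle : mVal n + t / 2 ≤ n := by unfold mVal; omega
    rcases Nat.lt_or_ge (mVal n + t / 2) n with h' | h'
    · rw [Nat.mod_eq_of_lt h'] at h; unfold mVal at h; omega
    · have hq : mVal n + t / 2 = n := le_antisymm hle h'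
      unfold mVal at hq; omega

lemma alpha_one_or_pred' (n t : ℕ) (hn : 9 ≤ n) (h1 : 1 ≤ t) (h2 : t ≤ n)
    (h : alphaSeq n t = 1 ∨ alphaSeq n t = n - 1) : t = n - 1 ∨ t = n - 2 := by
  rcases Nat.even_or_odd t with he | ho
  · rw [alphaSeq_even' n t (by omega) h1 (Nat.even_iff.mp he) h2] at h
    have := Nat.even_iff.mp he; unfold mVal at h; omega
  · rw [alphaSeq_odd' n t (Nat.odd_iff.mp ho)] at h
    have := Nat.odd_iff.mp ho
    have hle : mVal n + t / 2 ≤ n := by unfold mVal; omega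
    rcases Nat.lt_or_ge (mVal n + t / 2) n with h' | h'
    · rw [Nat.mod_eq_of_lt h'] at h; unfold mVal at h; omega
    · have hq : mVal n + t / 2 = n := le_antisymm hle h'
      rw [hq, Nat.mod_self] at h; omega

lemma alpha_n' (n : ℕ) (hn : 9 ≤ n) : alphaSeq n n = 0 := by
  rcases Nat.even_or_odd n with he | ho
  · rw [alphaSeq_even' n n (by omega) (by omega) (Nat.even_iff.mp he) le_rfl]
    have := Nat.even_iff.mp he; unfold mVal; omega
  · rw [alphaSeq_odd' n n (Nat.odd_iff.mp ho)]
    have := Nat.odd_iff.mp ho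
    have h : mVal n + n / 2 = n := by unfold mVal; omega
    rw [h, Nat.mod_self]

lemma alpha_pair' (n : ℕ) (hn : 9 ≤ n) :
    (alphaSeq n (n-1) = 1 ∧ alphaSeq n (n-2) = n-1) ∨
    (alphaSeq n (n-1) = n-1 ∧ alphaSeq n (n-2) = 1) := by
  rcases Nat.even_or_odd n with he | ho
  · right
    have hne := Nat.even_iff.mp he
    constructor
    · rw [alphaSeq_odd' n (n-1) (by omega)]
      rw [Nat.mod_eq_of_lt (by unfold mVal; omega)]
      unfold mVal; omega
    · rw [alphaSeq_even' n (n-2) (by omega) (by omega) (by omega) (by omega)]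
      unfold mVal; omega
  · left
    have hno := Nat.odd_iff.mp ho
    constructor
    · rw [alphaSeq_even' n (n-1) (by omega) (by omega) (by omega) (by omega)]
      unfold mVal; omega
    · rw [alphaSeq_odd' n (n-2) (by omega)]
      rw [Nat.mod_eq_of_lt (by unfold mVal; omega)]
      unfold mVal; omega

lemma conn_triple' (n : ℕ) (hn : 9 ≤ n) :
    ((sqCycle n).induce ({0, 1, n-1} : Set ℕ)).Connected := by
  have h01 : (sqCycle n).Adj 0 1 :=
    ⟨by omega, by omega, by omega, Or.inl (by rw [Nat.mod_eq_of_lt (by omega)])⟩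
  have h0p : (sqCycle n).Adj 0 (n-1) :=
    ⟨by omega, by omega, by omega, Or.inr (Or.inr (Or.inl (by
      rw [show n - 1 + 1 = n by omega, Nat.mod_self])))⟩
  have h1p : (sqCycle n).Adj 1 (n-1) :=
    ⟨by omega, by omega, by omega, Or.inr (Or.inr (Or.inr (by
      rw [show n - 1 + 2 = n + 1 by omega, Nat.add_mod_left, Nat.mod_eq_of_lt (by omega)])))⟩
  have h0m : (0 : ℕ) ∈ ({0, 1, n-1} : Set ℕ) := by left; rfl
  haveI : Nonempty (({0, 1, n-1} : Set ℕ)) := ⟨⟨0, h0m⟩⟩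
  constructor
  rintro ⟨x, hx⟩ ⟨y, hy⟩
  have hadj : ∀ a b : ℕ, a ∈ ({0, 1, n-1} : Set ℕ) → b ∈ ({0, 1, n-1} : Set ℕ) →
      a ≠ b → (sqCycle n).Adj a b := by
    intro a b ha hb hab
    simp only [Set.mem_insert_iff, Set.mem_singleton_iff] at ha hb
    rcases ha with rfl | rfl | rfl <;> rcases hb with rfl | rfl | rfl <;>
      first
        | exact absurd rfl hab
        | exact h01 | exact h01.symm | exact h0p | exact h0p.symm
        | exact h1p | exact h1p.symm
  by_cases hxy : x = y
  · subst hxy; rfl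
  · exact SimpleGraph.Adj.reachable (hadj x y hx hy hxy)

end AlphaRangeAux

/-- If `F` is a facet of `Δ₃(Wₙ)` with `F ∈ T_s` and
`F^c = {α_s} ⊔ {s₁, s₂}`, then `α_s ∉ {0, 1, n−1}`; equivalently `2 ≤ α_s ≤ n−2`. -/
theorem alpha_range (n : ℕ) (hn : 9 ≤ n) (F : Finset ℕ)
    (hF : IsFacet n F) (s s1 s2 : ℕ) (hdec : cDecomp n s s1 s2 F) :
    alphaSeq n s ∉ ({0, 1, n - 1} : Finset ℕ) ∧
      2 ≤ alphaSeq n s ∧ alphaSeq n s ≤ n - 2 := by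
  obtain ⟨⟨hs1n, hsn, hmem, hlt⟩, h12, hne1, hne2, hc⟩ := hdec
  have haF : alphaSeq n s < n := by
    have h := hmem
    unfold cmpl at h
    simp only [Finset.mem_sdiff, Finset.mem_range] at h
    exact h.1
  have hm1 : s1 ∈ cmpl n F := by rw [hc]; simp
  have hm2 : s2 ∈ cmpl n F := by rw [hc]; simp
  obtain ⟨p, q, hp1, hpq, hqn, hap, haq⟩ := hlt s1 hm1 (fun h => hne1 h.symm)
  obtain ⟨p', q', hp1', hpq', hqn', hap', haq'⟩ := hlt s2 hm2 (fun h => hne2 h.symm)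
  have hkey : alphaSeq n s ≠ 0 ∧ alphaSeq n s ≠ 1 ∧ alphaSeq n s ≠ n - 1 := by
    have hz : alphaSeq n s ≠ 0 := by
      intro h0
      have hp := alpha_eq_zero' n p hn hp1 (by omega) (by rw [hap]; exact h0)
      omega
    have hmain : ¬ (alphaSeq n s = 1 ∨ alphaSeq n s = n - 1) := by
      intro h0
      have hp := alpha_one_or_pred' n p hn hp1 (by omega) (by rw [hap]; exact h0)
      have hp' := alpha_one_or_pred' n p' hn hp1' (by omega) (by rw [hap']; exact h0)
      have hαn := alpha_n' n hn
      have hpair := alpha_pair' n hn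
      have hneq : alphaSeq n (n-1) ≠ alphaSeq n (n-2) := by
        rcases hpair with ⟨u, v⟩ | ⟨u, v⟩ <;> omega
      have hpp' : p = p' := by
        rcases hp with h | h <;> rcases hp' with h' | h'
        · omega
        · exfalso; rw [h] at hap; rw [h'] at hap'; exact hneq (hap.trans hap'.symm)
        · exfalso; rw [h'] at hap'; rw [h] at hap; exact hneq (hap'.trans hap.symm)
        · omega
      rcases hp with h | h
      · -- p = p' = n - 1, so q = q' = n, s1 = s2 = 0
        have hq : q = n := by omega
        have hq' : q' = n := by omega
        rw [hq, hαn] at haq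
        rw [hq', hαn] at haq'
        omega
      · -- p = p' = n - 2
        rw [h] at hap
        have hq : q = n - 1 ∨ q = n := by omega
        have hq' : q' = n - 1 ∨ q' = n := by omega
        have hv1 : s1 = alphaSeq n (n-1) ∨ s1 = 0 := by
          rcases hq with rfl | rfl
          · left; exact haq.symm
          · right; rw [← haq, hαn]
        have hv2 : s2 = alphaSeq n (n-1) ∨ s2 = 0 := by
          rcases hq' with rfl | rfl
          · left; exact haq'.symm
          · right; rw [← haq', hαn]
        apply hF.2.2
        have hset : (↑(cmpl n F) : Set ℕ) = ({0, 1, n-1} : Set ℕ) := by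
          rw [hc]
          ext x
          simp only [Finset.coe_insert, Finset.coe_singleton, Set.mem_insert_iff,
            Set.mem_singleton_iff]
          rcases hpair with ⟨u, v⟩ | ⟨u, v⟩ <;> omega
        rw [hset]
        exact conn_triple' n hn
    exact ⟨hz, fun h => hmain (Or.inl h), fun h => hmain (Or.inr h)⟩
  constructor
  · simp only [Finset.mem_insert, Finset.mem_singleton]
    push_neg
    exact hkey
  · omega
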